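/- Let u, ω : ℝ⁴ → ℝ³ be smooth, φ : ℝ³ → ℝ smooth, γ ∈ ℝ, and suppose: (vorticity equations) ωⁱ_t + Σⱼ(uʲωⁱⱼ − ωʲuⁱⱼ) + ωⁱΣⱼuʲⱼ − uⁱΣⱼωʲⱼ = 0 for i = 1,2,3; (solenoidality) Σᵢωⁱᵢ = 0; (incompressibility) Σᵢuⁱᵢ = 0; and (constraint) Σᵢ φᵢuⁱ = γ everywhere. Then for every smooth f : ℝ → ℝ, setting w = Σᵢφᵢωⁱ, the infinite conservation law D_t f(w) + Σⱼ Dⱼ(uʲ f(w)) = 0 holds pointwise. -/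

import Mathlib

/-- Partial derivative of a function of n real variables in direction i. -/
noncomputable def pd {n : ℕ} (i : Fin n) (f : (Fin n → ℝ) → ℝ) (x : Fin n → ℝ) : ℝ :=
  fderiv ℝ f x (Pi.single i 1)

/-- The spatial part of a space-time point (coordinate 0 is time). -/
def sp (x : Fin 4 → ℝ) : Fin 3 → ℝ := fun i => x i.succ

noncomputable def spL : (Fin 4 → ℝ) →L[ℝ] (Fin 3 → ℝ) :=
  ContinuousLinearMap.pi (fun i => ContinuousLinearMap.proj i.succ)

lemma sp_eq_spL : sp = spL := rfl

lemma pd_mul {n : ℕ} (i : Fin n) {f g : (Fin n → ℝ) → ℝ} {x : Fin n → ℝ}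
    (hf : DifferentiableAt ℝ f x) (hg : DifferentiableAt ℝ g x) :
    pd i (fun y => f y * g y) x = pd i f x * g x + f x * pd i g x := by
  unfold pd
  rw [fderiv_fun_mul hf hg]
  simp [smul_eq_mul]
  ring

lemma pd_sum {n : ℕ} (i : Fin n) {ι : Type*} {s : Finset ι}
    {f : ι → (Fin n → ℝ) → ℝ} {x : Fin n → ℝ}
    (h : ∀ k ∈ s, DifferentiableAt ℝ (f k) x) :
    pd i (fun y => ∑ k ∈ s, f k y) x = ∑ k ∈ s, pd i (f k) x := by
  unfold pd
  rw [fderiv_fun_sum h]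
  simp

lemma pd_comp {n : ℕ} (i : Fin n) {f : ℝ → ℝ} {g : (Fin n → ℝ) → ℝ} {x : Fin n → ℝ}
    (hf : DifferentiableAt ℝ f (g x)) (hg : DifferentiableAt ℝ g x) :
    pd i (fun y => f (g y)) x = deriv f (g x) * pd i g x := by
  unfold pd
  rw [show (fun y => f (g y)) = f ∘ g from rfl, fderiv_comp x hf hg]
  simp only [ContinuousLinearMap.comp_apply]
  have h : ∀ a : ℝ, fderiv ℝ f (g x) a = a * deriv f (g x) := by
    intro a
    rw [show a = a • (1:ℝ) by simp, map_smul, fderiv_apply_one_eq_deriv, smul_eq_mul]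
    simp
  rw [h]
  ring

lemma spL_single_succ (j : Fin 3) : spL (Pi.single j.succ 1) = Pi.single j 1 := by
  funext i
  simp [spL, Pi.single_apply, Fin.succ_inj]

lemma spL_single_zero : spL (Pi.single (0 : Fin 4) 1) = 0 := by
  funext i
  simp [spL, Pi.single_apply, (Fin.succ_ne_zero i)]

lemma pd_sp_succ (j : Fin 3) {g : (Fin 3 → ℝ) → ℝ} {x : Fin 4 → ℝ}
    (hg : DifferentiableAt ℝ g (sp x)) :
    pd j.succ (fun y => g (sp y)) x = pd j g (sp x) := by
  rw [sp_eq_spL] at hg ⊢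
  unfold pd
  rw [show (fun y => g (spL y)) = g ∘ spL from rfl,
    fderiv_comp x hg (spL.differentiableAt), spL.fderiv]
  simp only [ContinuousLinearMap.coe_comp', Function.comp_apply]
  rw [spL_single_succ]

lemma pd_sp_zero {g : (Fin 3 → ℝ) → ℝ} {x : Fin 4 → ℝ}
    (hg : DifferentiableAt ℝ g (sp x)) :
    pd 0 (fun y => g (sp y)) x = 0 := by
  rw [sp_eq_spL] at hg
  unfold pd
  rw [show (fun y => g (sp y)) = g ∘ spL from rfl,
    fderiv_comp x hg (spL.differentiableAt), spL.fderiv]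
  simp only [ContinuousLinearMap.coe_comp', Function.comp_apply]
  rw [spL_single_zero]
  simp

lemma contDiff_pd {n : ℕ} (i : Fin n) {f : (Fin n → ℝ) → ℝ} (hf : ContDiff ℝ (⊤ : ℕ∞) f) :
    ContDiff ℝ (⊤ : ℕ∞) (pd i f) := by
  have : pd i f = fun x => (ContinuousLinearMap.apply ℝ ℝ (Pi.single i (1:ℝ))) (fderiv ℝ f x) := rfl
  rw [this]
  exact (ContinuousLinearMap.apply ℝ ℝ (Pi.single i (1:ℝ))).contDiff.comp
    (hf.fderiv_right (m := (⊤ : ℕ∞)) (by simp))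

lemma pd_pd_symm {n : ℕ} {φ : (Fin n → ℝ) → ℝ} (hφ : ContDiff ℝ (⊤ : ℕ∞) φ) (i j : Fin n)
    (z : Fin n → ℝ) :
    pd j (pd i φ) z = pd i (pd j φ) z := by
  have hd : ∀ y, HasFDerivAt φ (fderiv ℝ φ y) y :=
    fun y => (hφ.differentiable (by simp) y).hasFDerivAt
  have hd2 : DifferentiableAt ℝ (fderiv ℝ φ) z :=
    ((hφ.fderiv_right (m := (⊤ : ℕ∞)) (by simp)).differentiable (by simp)) z
  have hsymm := second_derivative_symmetric hd hd2.hasFDerivAt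
  have key : ∀ v : Fin n → ℝ, fderiv ℝ (fun y => fderiv ℝ φ y v) z
      = (fderiv ℝ (fderiv ℝ φ) z).flip v := by
    intro v
    rw [fderiv_clm_apply hd2 (differentiableAt_const v)]
    simp
  unfold pd
  rw [show (fun x => fderiv ℝ φ x (Pi.single i 1)) = fun y => fderiv ℝ φ y (Pi.single i 1) from rfl]
  rw [key, key]
  exact hsymm _ _

/-- Infinite conservation laws of the constrained vorticity system:
for any smooth f, D_t f(w) + Σⱼ Dⱼ(uʲ f(w)) = 0 on solutions, with w = Σᵢ φᵢωⁱ
and the constraint Σᵢ φᵢuⁱ = γ.  Coordinates: 0 = t, 1,2,3 spatial. -/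
theorem constrained_vorticity_infinite_conservation
    (u ω : Fin 3 → (Fin 4 → ℝ) → ℝ)
    (hu : ∀ i, ContDiff ℝ (⊤ : ℕ∞) (u i)) (hω : ∀ i, ContDiff ℝ (⊤ : ℕ∞) (ω i))
    (φ : (Fin 3 → ℝ) → ℝ) (hφ : ContDiff ℝ (⊤ : ℕ∞) φ) (γ : ℝ)
    (w : (Fin 4 → ℝ) → ℝ)
    (hw : ∀ x, w x = ∑ i, pd i φ (sp x) * ω i x)
    (hvort : ∀ (i : Fin 3) x, pd 0 (ω i) x
        + (∑ j, (u j x * pd j.succ (ω i) x - ω j x * pd j.succ (u i) x))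
        + ω i x * (∑ j, pd j.succ (u j) x) - u i x * (∑ j, pd j.succ (ω j) x) = 0)
    (hsol : ∀ x, ∑ i, pd i.succ (ω i) x = 0)
    (hinc : ∀ x, ∑ i, pd i.succ (u i) x = 0)
    (hconstr : ∀ x, ∑ i, pd i φ (sp x) * u i x = γ) :
    ∀ f : ℝ → ℝ, ContDiff ℝ (⊤ : ℕ∞) f →
      ∀ x, pd 0 (fun y => f (w y)) x
        + ∑ j, pd j.succ (fun y => u j y * f (w y)) x = 0 := by
  intro f hf x
  -- replace w by its formula
  have hweq : w = fun y => ∑ i, pd i φ (sp y) * ω i y := funext hw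
  subst hweq
  set W : (Fin 4 → ℝ) → ℝ := fun y => ∑ i, pd i φ (sp y) * ω i y with hWdef
  -- smoothness facts
  have hφsp : ∀ i : Fin 3, ContDiff ℝ (⊤ : ℕ∞) (fun y : Fin 4 → ℝ => pd i φ (sp y)) := by
    intro i
    exact (contDiff_pd i hφ).comp (spL.contDiff)
  have hWc : ContDiff ℝ (⊤ : ℕ∞) W :=
    ContDiff.sum fun i _ => (hφsp i).mul (hω i)
  have dW : DifferentiableAt ℝ W x := (hWc.differentiable (by simp)) x
  have du : ∀ (i : Fin 3) (y), DifferentiableAt ℝ (u i) y :=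
    fun i y => ((hu i).differentiable (by simp)) y
  have dω : ∀ (i : Fin 3) (y), DifferentiableAt ℝ (ω i) y :=
    fun i y => ((hω i).differentiable (by simp)) y
  have dφsp : ∀ (i : Fin 3) (y), DifferentiableAt ℝ (fun z : Fin 4 → ℝ => pd i φ (sp z)) y :=
    fun i y => ((hφsp i).differentiable (by simp)) y
  have dφ3 : ∀ (i : Fin 3) (z), DifferentiableAt ℝ (pd i φ) z :=
    fun i z => ((contDiff_pd i hφ).differentiable (by simp)) z
  have df : ∀ a, DifferentiableAt ℝ f a := fun a => (hf.differentiable (by simp)) a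
  have dfW : DifferentiableAt ℝ (fun y => f (W y)) x := (df (W x)).comp x dW
  -- derivative expansions of W
  have hP0 : pd 0 W x = ∑ i, pd i φ (sp x) * pd 0 (ω i) x := by
    rw [hWdef, pd_sum 0 (fun i _ => (dφsp i x).fun_mul (dω i x))]
    refine Finset.sum_congr rfl fun i _ => ?_
    rw [pd_mul 0 (dφsp i x) (dω i x), pd_sp_zero (dφ3 i (sp x))]
    ring
  have hPj : ∀ j : Fin 3, pd j.succ W x
      = ∑ i, (pd j (pd i φ) (sp x) * ω i x + pd i φ (sp x) * pd j.succ (ω i) x) := by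
    intro j
    rw [hWdef, pd_sum j.succ (fun i _ => (dφsp i x).fun_mul (dω i x))]
    refine Finset.sum_congr rfl fun i _ => ?_
    rw [pd_mul j.succ (dφsp i x) (dω i x), pd_sp_succ j (dφ3 i (sp x))]
  -- differentiated constraint
  have hG : ∀ j : Fin 3,
      ∑ i, (pd j (pd i φ) (sp x) * u i x + pd i φ (sp x) * pd j.succ (u i) x) = 0 := by
    intro j
    have h0 : pd j.succ (fun y : Fin 4 → ℝ => ∑ i, pd i φ (sp y) * u i y) x = 0 := by
      rw [show (fun y : Fin 4 → ℝ => ∑ i, pd i φ (sp y) * u i y) = fun _ => γ from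
        funext hconstr]
      simp [pd]
    rw [pd_sum j.succ (fun i _ => (dφsp i x).fun_mul (du i x))] at h0
    rw [← h0]
    refine Finset.sum_congr rfl fun i _ => ?_
    rw [pd_mul j.succ (dφsp i x) (du i x), pd_sp_succ j (dφ3 i (sp x))]
  -- key transport identity
  have key : pd 0 W x + ∑ j, u j x * pd j.succ W x = 0 := by
    have hsum : ∑ j : Fin 3, u j x * pd j.succ W x
        = ∑ j : Fin 3, u j x *
          (∑ i, (pd j (pd i φ) (sp x) * ω i x + pd i φ (sp x) * pd j.succ (ω i) x)) :=
      Finset.sum_congr rfl fun j _ => by rw [hPj j]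
    rw [hP0, hsum]
    have hv0 := hvort 0 x
    have hv1 := hvort 1 x
    have hv2 := hvort 2 x
    have hs := hsol x
    have hi := hinc x
    have hg0 := hG 0
    have hg1 := hG 1
    have hg2 := hG 2
    have hS01 := pd_pd_symm hφ 0 1 (sp x)
    have hS02 := pd_pd_symm hφ 0 2 (sp x)
    have hS12 := pd_pd_symm hφ 1 2 (sp x)
    simp only [Fin.sum_univ_three] at hv0 hv1 hv2 hs hi hg0 hg1 hg2 ⊢
    linear_combination
      pd 0 φ (sp x) * hv0 + pd 1 φ (sp x) * hv1 + pd 2 φ (sp x) * hv2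
      - (pd 0 φ (sp x) * ω 0 x + pd 1 φ (sp x) * ω 1 x + pd 2 φ (sp x) * ω 2 x) * hi
      + (pd 0 φ (sp x) * u 0 x + pd 1 φ (sp x) * u 1 x + pd 2 φ (sp x) * u 2 x) * hs
      + ω 0 x * hg0 + ω 1 x * hg1 + ω 2 x * hg2
      + (u 1 x * ω 0 x - u 0 x * ω 1 x) * hS01
      + (u 2 x * ω 0 x - u 0 x * ω 2 x) * hS02
      + (u 2 x * ω 1 x - u 1 x * ω 2 x) * hS12
  -- final assembly
  have e0 : pd 0 (fun y => f (W y)) x = deriv f (W x) * pd 0 W x :=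
    pd_comp 0 (df (W x)) dW
  have ej : ∀ j : Fin 3, pd j.succ (fun y => u j y * f (W y)) x
      = pd j.succ (u j) x * f (W x) + u j x * (deriv f (W x) * pd j.succ W x) := by
    intro j
    rw [pd_mul j.succ (du j x) dfW, pd_comp j.succ (df (W x)) dW]
  have hsum2 : ∑ j : Fin 3, pd j.succ (fun y => u j y * f (W y)) x
      = ∑ j : Fin 3, (pd j.succ (u j) x * f (W x) + u j x * (deriv f (W x) * pd j.succ W x)) :=
    Finset.sum_congr rfl fun j _ => ej j
  rw [e0, hsum2]
  have hi := hinc x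
  simp only [Fin.sum_univ_three] at hi key ⊢
  linear_combination deriv f (W x) * key + f (W x) * hi
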